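/- arXiv:1609.05289 — 4 statements merged into one kernel-verified Lean document; each statement's English description precedes it below -/
import Mathlib

section
/- Let L be a finite modular non-distributive lattice. Then L has a sublattice L' isomorphic to the diamond M₃ such that rank(max L') − rank(min L') = 2, i.e., the three middle elements of L' each cover min L' and are covered by max L'. -/
/-!
Any non-distributive triple `a, b, c` of a modular lattice yields a diamond: project `a, b, c`
to the interval between the lower median `(a ⊓ b) ⊔ (b ⊓ c) ⊔ (c ⊓ a)` and the upper median
`(a ⊔ b) ⊓ (b ⊔ c) ⊓ (c ⊔ a)`. In a finite lattice choose a diamond whose interval `[e, f]` is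
minimal under inclusion. If `e < a < x`, then `a`, `(a ⊔ z) ⊓ y`, `(a ⊔ y) ⊓ z` form a diamond
from `e` to `(a ⊔ y) ⊓ (a ⊔ z) < f`, and dually above `x`; hence `e ⋖ x ⋖ f`. Finally, in a
finite modular lattice every covering step raises the height by one (Jordan–Dedekind).
-/

open Order OrderDual

section Height

variable {α : Type*} [Preorder α] [Finite α]

lemma Order.height_ne_top_of_finite (x : α) : height x ≠ ⊤ := by
  have := Fintype.ofFinite α
  intro h
  obtain ⟨p, -, hlen⟩ := height_eq_top_iff.mp h (Fintype.card α)
  exact (hlen ▸ p.length_lt_card).false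

lemma Order.exists_covBy_height_eq_add_one {a b : α} (hab : a < b) :
    ∃ m, m ⋖ b ∧ height b = height m + 1 := by
  obtain ⟨m, hmb, hmax⟩ := Set.exists_max_image {y | y < b} height (Set.toFinite _) ⟨a, hab⟩
  refine ⟨m, ⟨hmb, fun t hmt htb => ?_⟩, ?_⟩
  · exact (hmax t htb).not_gt (height_strictMono hmt (height_ne_top_of_finite m).lt_top)
  · refine le_antisymm ?_ (height_add_one_le hmb)
    rw [height_eq_iSup_lt_height]
    exact iSup₂_le fun y hy => add_le_add_left (hmax y hy) 1

end Height

lemma Order.height_eq_add_one_of_covBy {L : Type*} [Lattice L] [IsLowerModularLattice L]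
    [Finite L] {a b : L} (hab : a ⋖ b) : height b = height a + 1 := by
  induction b using WellFoundedLT.induction generalizing a with
  | _ b ih =>
  obtain ⟨m, hmb, hm⟩ := exists_covBy_height_eq_add_one hab.lt
  rcases eq_or_ne a m with rfl | ham
  · exact hm
  have hsup : a ⊔ m = b := hab.wcovBy.sup_eq hmb.wcovBy ham
  have hm' : height m = height (a ⊓ m) + 1 :=
    ih m hmb.lt (inf_covBy_of_covBy_sup_left (hsup ▸ hab))
  have ha' : height a = height (m ⊓ a) + 1 :=
    ih a hab.lt (inf_covBy_of_covBy_sup_left (by rwa [sup_comm, hsup]))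
  rw [hm, hm', inf_comm, ← ha']

section Diamond

variable {L : Type*} [Lattice L]

structure IsDiamond (e x y z f : L) : Prop where
  inf_xy : x ⊓ y = e
  inf_xz : x ⊓ z = e
  inf_yz : y ⊓ z = e
  sup_xy : x ⊔ y = f
  sup_xz : x ⊔ z = f
  sup_yz : y ⊔ z = f
  bot_ne_top : e ≠ f

namespace IsDiamond

variable {e x y z f : L}

lemma rotate (D : IsDiamond e x y z f) : IsDiamond e y z x f :=
  ⟨D.inf_yz, inf_comm x y ▸ D.inf_xy, inf_comm x z ▸ D.inf_xz,
    D.sup_yz, sup_comm x y ▸ D.sup_xy, sup_comm x z ▸ D.sup_xz, D.bot_ne_top⟩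

lemma swap (D : IsDiamond e x y z f) : IsDiamond e x z y f :=
  ⟨D.inf_xz, D.inf_xy, inf_comm y z ▸ D.inf_yz,
    D.sup_xz, D.sup_xy, sup_comm y z ▸ D.sup_yz, D.bot_ne_top⟩

lemma dual (D : IsDiamond e x y z f) :
    IsDiamond (toDual f) (toDual x) (toDual y) (toDual z) (toDual e) :=
  ⟨D.sup_xy, D.sup_xz, D.sup_yz, D.inf_xy, D.inf_xz, D.inf_yz, D.bot_ne_top.symm⟩

lemma of_dual {e x y z f : Lᵒᵈ} (D : IsDiamond e x y z f) :
    IsDiamond (ofDual f) (ofDual x) (ofDual y) (ofDual z) (ofDual e) :=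
  ⟨D.sup_xy, D.sup_xz, D.sup_yz, D.inf_xy, D.inf_xz, D.inf_yz, D.bot_ne_top.symm⟩

lemma ne_bot (D : IsDiamond e x y z f) : x ≠ e := by
  rintro rfl
  have hy : y = f := by rw [← D.sup_xy, sup_eq_right.mpr (D.inf_xy ▸ inf_le_right)]
  have hz : z = x := by rw [← D.inf_yz, hy, inf_eq_right.mpr (D.sup_yz ▸ le_sup_right)]
  exact D.bot_ne_top (by rw [← D.sup_xz, hz, sup_idem])

lemma bot_lt (D : IsDiamond e x y z f) : e < x :=
  (D.inf_xy ▸ inf_le_left : e ≤ x).lt_of_ne' D.ne_bot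

lemma lt_top (D : IsDiamond e x y z f) : x < f :=
  D.dual.bot_lt

lemma not_le (D : IsDiamond e x y z f) : ¬ x ≤ y := fun h =>
  D.ne_bot (by rw [← D.inf_xy, inf_eq_left.mpr h])

lemma ne (D : IsDiamond e x y z f) : x ≠ y := fun h => D.not_le h.le

lemma inf_inf_sup_eq {a : L} (D : IsDiamond e x y z f) (hea : e ≤ a) (hax : a ≤ x) :
    a ⊓ ((a ⊔ y) ⊓ z) = e := by
  rw [← inf_assoc, inf_sup_self]
  exact le_antisymm (D.inf_xz ▸ inf_le_inf_right z hax) (le_inf hea D.rotate.rotate.bot_lt.le)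

end IsDiamond

section Median

def lowerMedian (a b c : L) : L := a ⊓ b ⊔ b ⊓ c ⊔ c ⊓ a

def upperMedian (a b c : L) : L := (a ⊔ b) ⊓ (b ⊔ c) ⊓ (c ⊔ a)

def medianProj (t a b c : L) : L := t ⊓ upperMedian a b c ⊔ lowerMedian a b c

lemma lowerMedian_rotate (a b c : L) : lowerMedian b c a = lowerMedian a b c := by
  unfold lowerMedian; ac_rfl

lemma lowerMedian_swap (a b c : L) : lowerMedian a c b = lowerMedian a b c := by
  unfold lowerMedian; ac_rfl

lemma upperMedian_rotate (a b c : L) : upperMedian b c a = upperMedian a b c := by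
  unfold upperMedian; ac_rfl

lemma upperMedian_swap (a b c : L) : upperMedian a c b = upperMedian a b c := by
  unfold upperMedian; ac_rfl

lemma medianProj_rotate (t a b c : L) : medianProj t b c a = medianProj t a b c := by
  rw [medianProj, medianProj, lowerMedian_rotate, upperMedian_rotate]

lemma medianProj_swap (t a b c : L) : medianProj t a c b = medianProj t a b c := by
  rw [medianProj, medianProj, lowerMedian_swap, upperMedian_swap]

lemma lowerMedian_le_upperMedian (a b c : L) : lowerMedian a b c ≤ upperMedian a b c := by
  simp only [lowerMedian, upperMedian, sup_le_iff, le_inf_iff]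
  grind [le_sup_of_le_left, le_sup_of_le_right, inf_le_left, inf_le_right]

lemma lowerMedian_le_sup_inf (a b c : L) : lowerMedian a b c ≤ b ⊔ c ⊓ a := by
  simp [lowerMedian, le_sup_of_le_left]

lemma inf_upperMedian (a b c : L) : a ⊓ upperMedian a b c = a ⊓ (b ⊔ c) := by
  rw [upperMedian, inf_right_comm _ _ (c ⊔ a), ← inf_assoc, ← inf_assoc, inf_sup_self, sup_comm,
    inf_sup_self]

variable [IsModularLattice L]

lemma medianProj_toDual (t a b c : L) :
    medianProj (toDual t) (toDual a) (toDual b) (toDual c) = toDual (medianProj t a b c) := by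
  change toDual ((t ⊔ lowerMedian a b c) ⊓ upperMedian a b c) = _
  rw [medianProj, sup_comm, sup_inf_assoc_of_le t (lowerMedian_le_upperMedian a b c), sup_comm]

lemma lowerMedian_ne_upperMedian {a b c : L} (h : a ⊓ (b ⊔ c) ≠ a ⊓ b ⊔ a ⊓ c) :
    lowerMedian a b c ≠ upperMedian a b c := by
  intro heq
  refine h (le_antisymm ?_ le_inf_sup)
  calc a ⊓ (b ⊔ c) = a ⊓ lowerMedian a b c := by rw [heq, inf_upperMedian]
    _ ≤ a ⊓ (b ⊔ c ⊓ a) := inf_le_inf_left a (lowerMedian_le_sup_inf a b c)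
    _ = a ⊓ b ⊔ c ⊓ a := (inf_sup_assoc_of_le b inf_le_right).symm
    _ = a ⊓ b ⊔ a ⊓ c := by rw [inf_comm c a]

lemma medianProj_inf_medianProj (a b c : L) :
    medianProj a a b c ⊓ medianProj b a b c = lowerMedian a b c := by
  have hE : lowerMedian a b c ≤ medianProj b a b c := le_sup_right
  have hb : medianProj b a b c ≤ b ⊔ c ⊓ a :=
    sup_le (inf_le_left.trans le_sup_left) (lowerMedian_le_sup_inf a b c)
  refine le_antisymm ?_ (le_inf le_sup_right hE)
  rw [medianProj, sup_comm, sup_inf_assoc_of_le _ hE]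
  refine sup_le le_rfl ?_
  calc a ⊓ upperMedian a b c ⊓ medianProj b a b c ≤ a ⊓ (b ⊔ c ⊓ a) := inf_le_inf inf_le_left hb
    _ = a ⊓ b ⊔ c ⊓ a := (inf_sup_assoc_of_le b inf_le_right).symm
    _ ≤ lowerMedian a b c := sup_le_sup_right le_sup_left _

lemma medianProj_sup_medianProj (a b c : L) :
    medianProj a a b c ⊔ medianProj b a b c = upperMedian a b c := by
  have := medianProj_inf_medianProj (toDual a) (toDual b) (toDual c)
  rwa [medianProj_toDual, medianProj_toDual] at this

lemma isDiamond_medianProj {a b c : L} (h : a ⊓ (b ⊔ c) ≠ a ⊓ b ⊔ a ⊓ c) :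
    IsDiamond (lowerMedian a b c) (medianProj a a b c) (medianProj b a b c) (medianProj c a b c)
      (upperMedian a b c) := by
  have inf_ac := medianProj_inf_medianProj a c b
  have inf_bc := medianProj_inf_medianProj b c a
  have sup_ac := medianProj_sup_medianProj a c b
  have sup_bc := medianProj_sup_medianProj b c a
  rw [medianProj_swap a, medianProj_swap c, lowerMedian_swap] at inf_ac
  rw [medianProj_swap a, medianProj_swap c, upperMedian_swap] at sup_ac
  rw [medianProj_rotate b, medianProj_rotate c, lowerMedian_rotate] at inf_bc
  rw [medianProj_rotate b, medianProj_rotate c, upperMedian_rotate] at sup_bc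
  exact ⟨medianProj_inf_medianProj a b c, inf_ac, inf_bc, medianProj_sup_medianProj a b c,
    sup_ac, sup_bc, lowerMedian_ne_upperMedian h⟩

end Median

namespace IsDiamond

variable [IsModularLattice L] {e x y z f : L}

lemma exists_lt_top_of_not_covBy (D : IsDiamond e x y z f) (h : ¬ e ⋖ x) :
    ∃ x' y' z' f', IsDiamond e x' y' z' f' ∧ f' < f := by
  obtain ⟨a, hea, hax⟩ := exists_lt_lt_of_not_covBy D.bot_lt h
  have hsup_z : a ⊔ (a ⊔ y) ⊓ z = (a ⊔ y) ⊓ (a ⊔ z) := by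
    rw [sup_comm, inf_sup_assoc_of_le z le_sup_left, sup_comm z a]
  have hsup_y : a ⊔ (a ⊔ z) ⊓ y = (a ⊔ y) ⊓ (a ⊔ z) := by
    rw [sup_comm, inf_sup_assoc_of_le y le_sup_left, sup_comm y a, inf_comm]
  have hinf_yz : (a ⊔ z) ⊓ y ⊓ ((a ⊔ y) ⊓ z) = e := by
    refine le_antisymm (D.inf_yz ▸ inf_le_inf inf_le_right inf_le_right) (le_inf ?_ ?_)
    · exact le_inf (hea.le.trans le_sup_left) D.rotate.bot_lt.le
    · exact le_inf (hea.le.trans le_sup_left) D.rotate.rotate.bot_lt.le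
  have hsup_yz : (a ⊔ z) ⊓ y ⊔ (a ⊔ y) ⊓ z = (a ⊔ y) ⊓ (a ⊔ z) := by
    have hy : y ⊔ (a ⊔ y) ⊓ z = a ⊔ y := by
      rw [sup_comm, inf_sup_assoc_of_le z le_sup_right, sup_comm z y, D.sup_yz,
        inf_eq_left.mpr (sup_le (hax.le.trans D.lt_top.le) D.rotate.lt_top.le)]
    rw [inf_sup_assoc_of_le y (inf_le_right.trans le_sup_right), hy, inf_comm]
  have hlt : a ⊔ z < f := by
    -- otherwise `x = x ⊓ (a ⊔ z) = a ⊔ x ⊓ z = a`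
    refine (sup_le (hax.le.trans D.lt_top.le) D.rotate.rotate.lt_top.le).lt_of_ne
      fun hf => hax.ne' ?_
    rw [← inf_eq_left.mpr D.lt_top.le, ← hf, inf_comm, sup_inf_assoc_of_le z hax.le, inf_comm z x,
      D.inf_xz, sup_eq_left.mpr hea.le]
  refine ⟨a, (a ⊔ z) ⊓ y, (a ⊔ y) ⊓ z, (a ⊔ y) ⊓ (a ⊔ z),
    ⟨D.swap.inf_inf_sup_eq hea.le hax.le, D.inf_inf_sup_eq hea.le hax.le, hinf_yz,
      hsup_y, hsup_z, hsup_yz, fun h => hea.not_ge ?_⟩, inf_le_right.trans_lt hlt⟩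
  exact h ▸ le_inf le_sup_left le_sup_left

lemma exists_bot_lt_of_not_covBy (D : IsDiamond e x y z f) (h : ¬ x ⋖ f) :
    ∃ e' x' y' z', IsDiamond e' x' y' z' f ∧ e < e' := by
  obtain ⟨x', y', z', f', D', hf'⟩ :=
    D.dual.exists_lt_top_of_not_covBy (toDual_covBy_toDual_iff.not.mpr h)
  exact ⟨_, _, _, _, D'.of_dual, hf'⟩

lemma exists_covBy [Finite L] (D : IsDiamond e x y z f) :
    ∃ e x y z f : L, IsDiamond e x y z f ∧ e ⋖ x ∧ x ⋖ f := by
  -- minimize the interval `[e, f]` under inclusion, i.e. `(toDual e, f)` in `Lᵒᵈ × L`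
  obtain ⟨⟨e, f⟩, hmin⟩ := Set.toFinite {p : Lᵒᵈ × L | ∃ x y z, IsDiamond (ofDual p.1) x y z p.2}
    |>.exists_minimal ⟨(toDual e, f), x, y, z, D⟩
  obtain ⟨x, y, z, D⟩ := hmin.prop
  refine ⟨_, x, y, z, _, D, ?_, ?_⟩
  · by_contra h
    obtain ⟨x', y', z', f', D', hf'⟩ := D.exists_lt_top_of_not_covBy h
    exact hmin.not_lt ⟨x', y', z', D'⟩ (Prod.mk_lt_mk_iff_right.mpr hf')
  · by_contra h
    obtain ⟨e', x', y', z', D', he'⟩ := D.exists_bot_lt_of_not_covBy h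
    exact hmin.not_lt (y := (toDual e', f)) ⟨x', y', z', D'⟩ (Prod.mk_lt_mk_iff_left.mpr he')

end IsDiamond

end Diamond

theorem modular_nondistrib_has_rank_two_diamond {L : Type*} [Lattice L] [Fintype L]
    [IsModularLattice L]
    (hnd : ¬ ∀ x y z : L, x ⊓ (y ⊔ z) = (x ⊓ y) ⊔ (x ⊓ z)) :
    ∃ e x y z f : L, e < x ∧ x < f ∧ e < y ∧ y < f ∧ e < z ∧ z < f ∧
      x ≠ y ∧ x ≠ z ∧ y ≠ z ∧
      (¬ x ≤ y ∧ ¬ y ≤ x) ∧ (¬ x ≤ z ∧ ¬ z ≤ x) ∧ (¬ y ≤ z ∧ ¬ z ≤ y) ∧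
      x ⊔ y = f ∧ x ⊔ z = f ∧ y ⊔ z = f ∧
      x ⊓ y = e ∧ x ⊓ z = e ∧ y ⊓ z = e ∧
      Order.height f = Order.height e + 2 := by
  push Not at hnd
  obtain ⟨a, b, c, h⟩ := hnd
  obtain ⟨e, x, y, z, f, D, hex, hxf⟩ := (isDiamond_medianProj h).exists_covBy
  refine ⟨e, x, y, z, f, D.bot_lt, D.lt_top, D.rotate.bot_lt, D.rotate.lt_top,
    D.rotate.rotate.bot_lt, D.rotate.rotate.lt_top, D.ne, D.swap.ne, D.rotate.ne,
    ⟨D.not_le, D.rotate.swap.not_le⟩, ⟨D.swap.not_le, D.rotate.rotate.not_le⟩,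
    ⟨D.rotate.not_le, D.rotate.rotate.swap.not_le⟩,
    D.sup_xy, D.sup_xz, D.sup_yz, D.inf_xy, D.inf_xz, D.inf_yz, ?_⟩
  rw [height_eq_add_one_of_covBy hxf, height_eq_add_one_of_covBy hex, add_assoc,
    one_add_one_eq_two]
end

section
/- Let L be a finite lattice, K a field, and I_L ⊆ K[L] the join-meet ideal generated by all binomials ab − (a ⊔ b)(a ⊓ b) for incomparable a, b ∈ L. If L' = {e, x, y, z, f} is a diamond sublattice of L (with e = min L', f = max L', and x, y, z pairwise incomparable), then the element e·(f·x − f·y) lies in I_L. -/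
open MvPolynomial

/-- The join-meet ideal of a finite lattice `L` in the polynomial ring `K[L]`:
it is generated by the binomials `ab - (a ⊔ b)(a ⊓ b)` for incomparable `a, b ∈ L`. -/
noncomputable def joinMeetIdeal (K : Type*) [Field K] (L : Type*) [Lattice L] :
    Ideal (MvPolynomial L K) :=
  Ideal.span {p | ∃ a b : L, ¬ a ≤ b ∧ ¬ b ≤ a ∧
    p = X a * X b - X (a ⊔ b) * X (a ⊓ b)}

theorem diamond_relation_in_joinMeetIdeal {K : Type*} [Field K]
    {L : Type*} [Lattice L] [Fintype L]
    (e x y z f : L) (hex : e < x) (hxf : x < f) (hey : e < y) (hyf : y < f)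
    (hez : e < z) (hzf : z < f)
    (hxy : ¬ x ≤ y ∧ ¬ y ≤ x) (hxz : ¬ x ≤ z ∧ ¬ z ≤ x) (hyz : ¬ y ≤ z ∧ ¬ z ≤ y)
    (hxy' : x ⊔ y = f ∧ x ⊓ y = e) (hxz' : x ⊔ z = f ∧ x ⊓ z = e)
    (hyz' : y ⊔ z = f ∧ y ⊓ z = e) :
    (X e * (X f * X x - X f * X y) : MvPolynomial L K) ∈ joinMeetIdeal K L := by
  have h1 : (X x * X z - X (x ⊔ z) * X (x ⊓ z) : MvPolynomial L K) ∈ joinMeetIdeal K L :=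
    Ideal.subset_span ⟨x, z, hxz.1, hxz.2, rfl⟩
  have h2 : (X y * X z - X (y ⊔ z) * X (y ⊓ z) : MvPolynomial L K) ∈ joinMeetIdeal K L :=
    Ideal.subset_span ⟨y, z, hyz.1, hyz.2, rfl⟩
  have h := Ideal.sub_mem _ (Ideal.mul_mem_left _ (X y) h1) (Ideal.mul_mem_left _ (X x) h2)
  rw [hxz'.1, hxz'.2, hyz'.1, hyz'.2] at h
  convert h using 1
  ring
end

section
/- Let L be a finite lattice containing a diamond sublattice {e, x₁, …, xₙ, f} where the middle elements x₁, …, xₙ (n ≥ 2) are exactly the elements of the open interval (e, f), pairwise incomparable with join f and meet e. Let S ⊆ L be a subset with S ∩ [e, f] = ∅. Then the monomial x₁·x_j does not lie in the ideal (I_L, S) of K[L] for any j ≠ 1, where I_L is the join-meet ideal and (I_L, S) is the ideal generated by I_L together with the variables in S. -/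
open MvPolynomial

/-- The ideal `(I_L, S)` generated by the join-meet ideal together with the
variables in `S`. -/
noncomputable def joinMeetIdealWith (K : Type*) [Field K] (L : Type*) [Lattice L]
    (S : Set L) : Ideal (MvPolynomial L K) :=
  joinMeetIdeal K L ⊔ Ideal.span (X '' S)

theorem monomial_not_in_ideal_of_diamond_config {K : Type*} [Field K]
    {L : Type*} [Lattice L] [Fintype L] (e f : L) (hef : e < f)
    (hpair : ∀ a ∈ Set.Ioo e f, ∀ b ∈ Set.Ioo e f, a ≠ b →
      ¬ a ≤ b ∧ ¬ b ≤ a ∧ a ⊔ b = f ∧ a ⊓ b = e)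
    (htwo : ∃ a ∈ Set.Ioo e f, ∃ b ∈ Set.Ioo e f, a ≠ b)
    (S : Set L) (hS : S ∩ Set.Icc e f = ∅) :
    ∀ x₁ ∈ Set.Ioo e f, ∀ xj ∈ Set.Ioo e f, x₁ ≠ xj →
      (X x₁ * X xj : MvPolynomial L K) ∉ joinMeetIdealWith K L S := by
  classical
  intro x₁ hx₁ xj hxj hne hmem
  -- evaluate all variables at the indicator function of [e,f]
  let v : L → K := fun a => if a ∈ Set.Icc e f then 1 else 0
  have hv1 : ∀ a ∈ Set.Icc e f, v a = 1 := fun a h => if_pos h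
  have hv0 : ∀ a, a ∉ Set.Icc e f → v a = 0 := fun a h => if_neg h
  have hker : joinMeetIdealWith K L S ≤ RingHom.ker (eval v) := by
    rw [joinMeetIdealWith, sup_le_iff]
    constructor
    · rw [joinMeetIdeal, Ideal.span_le]
      rintro p ⟨a, b, hab, hba, rfl⟩
      simp only [SetLike.mem_coe, RingHom.mem_ker, map_sub, map_mul, eval_X, sub_eq_zero]
      by_cases ha : a ∈ Set.Icc e f
      · by_cases hb : b ∈ Set.Icc e f
        · -- both in the interval, hence in the open interval
          have ha' : a ∈ Set.Ioo e f := by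
            refine ⟨lt_of_le_of_ne ha.1 ?_, lt_of_le_of_ne ha.2 ?_⟩
            · rintro rfl; exact hab hb.1
            · rintro rfl; exact hba hb.2
          have hb' : b ∈ Set.Ioo e f := by
            refine ⟨lt_of_le_of_ne hb.1 ?_, lt_of_le_of_ne hb.2 ?_⟩
            · rintro rfl; exact hba ha.1
            · rintro rfl; exact hab ha.2
          obtain ⟨-, -, hsup, hinf⟩ := hpair a ha' b hb' (by rintro rfl; exact hab le_rfl)
          have hfI : f ∈ Set.Icc e f := ⟨hef.le, le_rfl⟩
          have heI : e ∈ Set.Icc e f := ⟨le_rfl, hef.le⟩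
          rw [hsup, hinf, hv1 a ha, hv1 b hb, hv1 f hfI, hv1 e heI]
        · -- b outside: show a⊔b, a⊓b not both in [e,f]
          have h : ¬ (a ⊔ b ∈ Set.Icc e f ∧ a ⊓ b ∈ Set.Icc e f) := by
            rintro ⟨h1, h2⟩
            exact hb ⟨h2.1.trans inf_le_right, le_sup_right.trans h1.2⟩
          rw [hv0 b hb, mul_zero]
          rcases not_and_or.mp h with h' | h' <;>
            simp [hv0 _ h']
      · have h : ¬ (a ⊔ b ∈ Set.Icc e f ∧ a ⊓ b ∈ Set.Icc e f) := by
          rintro ⟨h1, h2⟩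
          exact ha ⟨h2.1.trans inf_le_left, le_sup_left.trans h1.2⟩
        rw [hv0 a ha, zero_mul]
        rcases not_and_or.mp h with h' | h' <;>
          simp [hv0 _ h']
    · rw [Ideal.span_le]
      rintro p ⟨s, hs, rfl⟩
      have hsI : s ∉ Set.Icc e f := by
        intro h
        exact absurd (Set.mem_inter hs h) (by rw [hS]; exact not_false)
      simp [RingHom.mem_ker, hv0 s hsI]
  have := hker hmem
  rw [RingHom.mem_ker, map_mul, eval_X, eval_X] at this
  have hx₁I : x₁ ∈ Set.Icc e f := ⟨hx₁.1.le, hx₁.2.le⟩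
  have hxjI : xj ∈ Set.Icc e f := ⟨hxj.1.le, hxj.2.le⟩
  rw [hv1 x₁ hx₁I, hv1 xj hxjI, mul_one] at this
  exact one_ne_zero this
end

section
/- Let L be a finite lattice with a diamond configuration: e < f, and the open interval (e, f) = {x₁, …, xₙ} with n ≥ 2, any two distinct xᵢ, x_j incomparable with xᵢ ⊔ x_j = f and xᵢ ⊓ x_j = e. Let S ⊆ L with S ∩ [e, f] = ∅. Then x₂ − x₃ (for n ≥ 3) lies in the colon ideal (I_L, S) : x₁ in K[L], but x₂ and x₃ individually do not; hence (I_L, S) : x₁ is not generated by I_L together with variables. -/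
open MvPolynomial

/-!
Both non-memberships are detected by evaluating at the indicator function `c` of a set `s ⊆ L`
satisfying `a, b ∈ s ↔ a ⊔ b, a ⊓ b ∈ s`: then `c a * c b = c (a ⊔ b) * c (a ⊓ b)`, so evaluation
at `c` kills `I_L`, and it kills the variables of `S` when `s` misses `S`.
With `s = [e, f]`, the image of `X y * X x₁` is `1` for `x₁, y ∈ (e, f)`, so `X y` is not in the
colon ideal. With `s = {x₂}` and `x₂ ∉ T` (forced, since `X x₂` is not in the colon ideal), the
image of `X x₂ - X x₃` is `1`, so this element of the colon ideal is not in `(I_L, T)`.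
-/

section

variable {L : Type*} [Lattice L]

theorem mem_Icc_and_mem_Icc_iff_sup_mem_and_inf_mem {e f a b : L} :
    a ∈ Set.Icc e f ∧ b ∈ Set.Icc e f ↔ a ⊔ b ∈ Set.Icc e f ∧ a ⊓ b ∈ Set.Icc e f :=
  ⟨fun ⟨ha, hb⟩ => ⟨⟨ha.1.trans le_sup_left, sup_le ha.2 hb.2⟩,
      ⟨le_inf ha.1 hb.1, inf_le_left.trans ha.2⟩⟩,
    fun ⟨hs, hi⟩ => ⟨⟨hi.1.trans inf_le_left, le_sup_left.trans hs.2⟩,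
      ⟨hi.1.trans inf_le_right, le_sup_right.trans hs.2⟩⟩⟩

theorem eq_and_eq_iff_sup_eq_and_inf_eq {x a b : L} :
    a = x ∧ b = x ↔ a ⊔ b = x ∧ a ⊓ b = x := by
  refine ⟨by rintro ⟨rfl, rfl⟩; simp, fun ⟨hs, hi⟩ => ?_⟩
  have hab : a = b := inf_eq_sup.mp (hi.trans hs.symm)
  subst hab
  simpa using hs

theorem indicator_one_mul_indicator_one_eq_sup_inf {K : Type*} [MulZeroOneClass K] {s : Set L}
    (hs : ∀ a b, a ∈ s ∧ b ∈ s ↔ a ⊔ b ∈ s ∧ a ⊓ b ∈ s) (a b : L) :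
    s.indicator (1 : L → K) a * s.indicator 1 b =
      s.indicator 1 (a ⊔ b) * s.indicator 1 (a ⊓ b) := by
  have hab := hs a b
  by_cases ha : a ∈ s <;> by_cases hb : b ∈ s <;>
    by_cases hsup : a ⊔ b ∈ s <;> by_cases hinf : a ⊓ b ∈ s <;>
    simp_all

end

section

variable {K : Type*} [Field K] {L : Type*} [Lattice L]

theorem X_mul_X_sub_mem_joinMeetIdeal {a b : L} (hab : ¬ a ≤ b) (hba : ¬ b ≤ a) :
    (X a * X b - X (a ⊔ b) * X (a ⊓ b) : MvPolynomial L K) ∈ joinMeetIdeal K L :=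
  Ideal.subset_span ⟨a, b, hab, hba, rfl⟩

theorem X_mem_joinMeetIdealWith {S : Set L} {s : L} (hs : s ∈ S) :
    (X s : MvPolynomial L K) ∈ joinMeetIdealWith K L S :=
  Ideal.mem_sup_right (Ideal.subset_span ⟨s, hs, rfl⟩)

theorem joinMeetIdealWith_le_ker_aeval {c : L → K}
    (hc : ∀ a b, c a * c b = c (a ⊔ b) * c (a ⊓ b)) {S : Set L} (hS : ∀ s ∈ S, c s = 0) :
    joinMeetIdealWith K L S ≤ RingHom.ker (aeval c : MvPolynomial L K →ₐ[K] K) := by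
  refine sup_le ?_ ?_
  · rw [joinMeetIdeal, Ideal.span_le]
    rintro p ⟨a, b, -, -, rfl⟩
    simp [RingHom.mem_ker, hc a b]
  · rw [Ideal.span_le]
    rintro p ⟨s, hs, rfl⟩
    simp [RingHom.mem_ker, hS s hs]

theorem X_notMem_colon_of_aeval {c : L → K}
    (hc : ∀ a b, c a * c b = c (a ⊔ b) * c (a ⊓ b)) {S : Set L} (hS : ∀ s ∈ S, c s = 0)
    {x y : L} (hx : c x ≠ 0) (hy : c y ≠ 0) :
    (X y : MvPolynomial L K) ∉
      (joinMeetIdealWith K L S).colon (Ideal.span {(X x : MvPolynomial L K)} : Set _) := by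
  intro hmem
  have h := joinMeetIdealWith_le_ker_aeval hc hS (Ideal.mem_colon_span_singleton.mp hmem)
  simp [RingHom.mem_ker, hx, hy] at h

theorem X_sub_X_notMem_joinMeetIdealWith {T : Set L} {y z : L} (hy : y ∉ T) (hyz : y ≠ z) :
    (X y - X z : MvPolynomial L K) ∉ joinMeetIdealWith K L T := by
  intro hmem
  have hT : ∀ s ∈ T, ({y} : Set L).indicator (1 : L → K) s = 0 := fun s hs =>
    Set.indicator_of_notMem (fun h => hy (by rwa [← Set.mem_singleton_iff.mp h])) _
  have h := joinMeetIdealWith_le_ker_aeval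
    (indicator_one_mul_indicator_one_eq_sup_inf fun _ _ => eq_and_eq_iff_sup_eq_and_inf_eq) hT hmem
  simp [RingHom.mem_ker, hyz.symm] at h

theorem X_sub_X_mem_colon (S : Set L) {x y z : L} (hxy : ¬ x ≤ y) (hyx : ¬ y ≤ x)
    (hxz : ¬ x ≤ z) (hzx : ¬ z ≤ x) (hsup : x ⊔ y = x ⊔ z) (hinf : x ⊓ y = x ⊓ z) :
    (X y - X z : MvPolynomial L K) ∈
      (joinMeetIdealWith K L S).colon (Ideal.span {(X x : MvPolynomial L K)} : Set _) := by
  rw [Ideal.mem_colon_span_singleton]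
  have hdiff : (X y - X z : MvPolynomial L K) * X x =
      (X x * X y - X (x ⊔ y) * X (x ⊓ y)) - (X x * X z - X (x ⊔ z) * X (x ⊓ z)) := by
    rw [hsup, hinf]; ring
  rw [hdiff]
  exact Ideal.mem_sup_left (Ideal.sub_mem _ (X_mul_X_sub_mem_joinMeetIdeal hxy hyx)
    (X_mul_X_sub_mem_joinMeetIdeal hxz hzx))

end

theorem colon_not_generated_by_variables_general {K : Type*} [Field K]
    {L : Type*} [Lattice L] (e f : L)
    (hpair : ∀ a ∈ Set.Ioo e f, ∀ b ∈ Set.Ioo e f, a ≠ b →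
      ¬ a ≤ b ∧ ¬ b ≤ a ∧ a ⊔ b = f ∧ a ⊓ b = e)
    (S : Set L) (hS : S ∩ Set.Icc e f = ∅)
    (x₁ x₂ x₃ : L) (h₁ : x₁ ∈ Set.Ioo e f) (h₂ : x₂ ∈ Set.Ioo e f)
    (h₃ : x₃ ∈ Set.Ioo e f) (h12 : x₁ ≠ x₂) (h13 : x₁ ≠ x₃) (h23 : x₂ ≠ x₃) :
    (X x₂ - X x₃ : MvPolynomial L K) ∈
        (joinMeetIdealWith K L S).colon ((Ideal.span {(X x₁ : MvPolynomial L K)} : Ideal (MvPolynomial L K)) : Set (MvPolynomial L K)) ∧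
      (X x₂ : MvPolynomial L K) ∉
        (joinMeetIdealWith K L S).colon ((Ideal.span {(X x₁ : MvPolynomial L K)} : Ideal (MvPolynomial L K)) : Set (MvPolynomial L K)) ∧
      (X x₃ : MvPolynomial L K) ∉
        (joinMeetIdealWith K L S).colon ((Ideal.span {(X x₁ : MvPolynomial L K)} : Ideal (MvPolynomial L K)) : Set (MvPolynomial L K)) ∧
      ¬ ∃ T : Set L, (joinMeetIdealWith K L S).colon ((Ideal.span {(X x₁ : MvPolynomial L K)} : Ideal (MvPolynomial L K)) : Set (MvPolynomial L K)) =
        joinMeetIdealWith K L T := by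
  obtain ⟨n12, n21, hs12, hi12⟩ := hpair x₁ h₁ x₂ h₂ h12
  obtain ⟨n13, n31, hs13, hi13⟩ := hpair x₁ h₁ x₃ h₃ h13
  have hmem : (X x₂ - X x₃ : MvPolynomial L K) ∈
      (joinMeetIdealWith K L S).colon (Ideal.span {(X x₁ : MvPolynomial L K)} : Set _) :=
    X_sub_X_mem_colon S n12 n21 n13 n31 (hs12.trans hs13.symm) (hi12.trans hi13.symm)
  have hnotMem : ∀ y ∈ Set.Ioo e f, (X y : MvPolynomial L K) ∉
      (joinMeetIdealWith K L S).colon (Ideal.span {(X x₁ : MvPolynomial L K)} : Set _) :=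
    fun y hy => X_notMem_colon_of_aeval
      (indicator_one_mul_indicator_one_eq_sup_inf
        fun _ _ => mem_Icc_and_mem_Icc_iff_sup_mem_and_inf_mem)
      (fun s hs => Set.indicator_of_notMem (fun h => hS.subset ⟨hs, h⟩) _)
      (by simp [Set.Ioo_subset_Icc_self h₁]) (by simp [Set.Ioo_subset_Icc_self hy])
  refine ⟨hmem, hnotMem x₂ h₂, hnotMem x₃ h₃, ?_⟩
  rintro ⟨T, hT⟩
  have hx₂T : x₂ ∉ T := fun hx₂ => hnotMem x₂ h₂ (hT ▸ X_mem_joinMeetIdealWith hx₂)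
  exact X_sub_X_notMem_joinMeetIdealWith hx₂T h23 (hT ▸ hmem)

theorem colon_not_generated_by_variables {K : Type*} [Field K]
    {L : Type*} [Lattice L] [Fintype L] (e f : L) (hef : e < f)
    (hpair : ∀ a ∈ Set.Ioo e f, ∀ b ∈ Set.Ioo e f, a ≠ b →
      ¬ a ≤ b ∧ ¬ b ≤ a ∧ a ⊔ b = f ∧ a ⊓ b = e)
    (S : Set L) (hS : S ∩ Set.Icc e f = ∅)
    (x₁ x₂ x₃ : L) (h₁ : x₁ ∈ Set.Ioo e f) (h₂ : x₂ ∈ Set.Ioo e f)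
    (h₃ : x₃ ∈ Set.Ioo e f) (h12 : x₁ ≠ x₂) (h13 : x₁ ≠ x₃) (h23 : x₂ ≠ x₃) :
    (X x₂ - X x₃ : MvPolynomial L K) ∈
        (joinMeetIdealWith K L S).colon ((Ideal.span {(X x₁ : MvPolynomial L K)} : Ideal (MvPolynomial L K)) : Set (MvPolynomial L K)) ∧
      (X x₂ : MvPolynomial L K) ∉
        (joinMeetIdealWith K L S).colon ((Ideal.span {(X x₁ : MvPolynomial L K)} : Ideal (MvPolynomial L K)) : Set (MvPolynomial L K)) ∧
      (X x₃ : MvPolynomial L K) ∉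
        (joinMeetIdealWith K L S).colon ((Ideal.span {(X x₁ : MvPolynomial L K)} : Ideal (MvPolynomial L K)) : Set (MvPolynomial L K)) ∧
      ¬ ∃ T : Set L, (joinMeetIdealWith K L S).colon ((Ideal.span {(X x₁ : MvPolynomial L K)} : Ideal (MvPolynomial L K)) : Set (MvPolynomial L K)) =
        joinMeetIdealWith K L T :=
  colon_not_generated_by_variables_general e f hpair S hS x₁ x₂ x₃ h₁ h₂ h₃ h12 h13 h23
end
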